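/- arXiv:math/0002191 — 3 statements merged into one kernel-verified Lean document; each statement's English description precedes it below -/
import Mathlib

section
/- Let R be an associative unital algebra over ℝ, let q > 0 be a real number with q ≠ 1, let s > 0 satisfy s² = q, and set h = s − s⁻¹. Suppose x⁻, x⁰, x⁺ ∈ R satisfy the quantum Euclidean space relations x⁻·x⁰ = q·(x⁰·x⁻), x⁺·x⁰ = q⁻¹·(x⁰·x⁺), and x⁺·x⁻ − x⁻·x⁺ = h·(x⁰)². Then the element r² := s·(x⁺·x⁻) + (x⁰)² + s⁻¹·(x⁻·x⁺) commutes with each of x⁻, x⁰, x⁺. -/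
/-- In an associative unital ℝ-algebra `R`, if `x⁻, x⁰, x⁺`
satisfy the quantum Euclidean space relations
`x⁻x⁰ = q x⁰x⁻`, `x⁺x⁰ = q⁻¹ x⁰x⁺`, `x⁺x⁻ − x⁻x⁺ = h (x⁰)²` (with `h = s − s⁻¹`,
`s² = q`, `q, s > 0`, `q ≠ 1`), then
`r² := s x⁺x⁻ + (x⁰)² + s⁻¹ x⁻x⁺` commutes with each of `x⁻, x⁰, x⁺`. -/
theorem quantum_radius_central
    (R : Type*) [Ring R] [Algebra ℝ R]
    (q s h : ℝ) (hq : 0 < q) (hq1 : q ≠ 1) (hs : 0 < s) (hsq : s ^ 2 = q)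
    (hh : h = s - s⁻¹)
    (xm x0 xp : R)
    (rel1 : xm * x0 = q • (x0 * xm))
    (rel2 : xp * x0 = q⁻¹ • (x0 * xp))
    (rel3 : xp * xm - xm * xp = h • (x0 ^ 2))
    (r2 : R) (hr2 : r2 = s • (xp * xm) + x0 ^ 2 + s⁻¹ • (xm * xp)) :
    Commute r2 xm ∧ Commute r2 x0 ∧ Commute r2 xp := by
  subst hh hr2 hsq
  have hs0 : s ≠ 0 := hs.ne'
  have com : xp * xm = xm * xp + (s - s⁻¹) • (x0 * x0) := by
    have := rel3
    rw [sub_eq_iff_eq_add] at this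
    rw [this, pow_two, add_comm]
  have w1 : ∀ y : R, xm * (x0 * y) = (s ^ 2) • (x0 * (xm * y)) := fun y => by
    rw [← mul_assoc, rel1, smul_mul_assoc, mul_assoc]
  have w2 : ∀ y : R, xp * (x0 * y) = (s ^ 2)⁻¹ • (x0 * (xp * y)) := fun y => by
    rw [← mul_assoc, rel2, smul_mul_assoc, mul_assoc]
  have w3 : ∀ y : R, xp * (xm * y) = xm * (xp * y) + (s - s⁻¹) • (x0 * (x0 * y)) :=
    fun y => by
    rw [← mul_assoc, com, add_mul, smul_mul_assoc, mul_assoc, mul_assoc]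
  refine ⟨?_, ?_, ?_⟩ <;> rw [commute_iff_eq] <;>
    simp only [pow_two, add_mul, mul_add, smul_mul_assoc, mul_smul_comm, smul_add,
      smul_smul, mul_assoc, rel1, rel2, com, w1, w2, w3] <;>
    match_scalars <;> field_simp <;> ring
end

section
/- Let R be an associative unital algebra over ℝ, let q > 0 be real with q ≠ 1, s > 0 with s² = q, and h = s − s⁻¹ (so h ≠ 0). Suppose x⁻, x⁰, x⁺ ∈ R satisfy x⁻x⁰ = q x⁰x⁻, x⁺x⁰ = q⁻¹ x⁰x⁺, x⁺x⁻ − x⁻x⁺ = h (x⁰)²; suppose Λ ∈ R is invertible with x^i Λ = q Λ x^i for each i ∈ {−, 0, +}; suppose x⁰ is invertible; and suppose r ∈ R commutes with x⁻, x⁰, x⁺, satisfies r Λ = q Λ r, and r² = s x⁺x⁻ + (x⁰)² + s⁻¹ x⁻x⁺. Define λ₋ := h⁻¹ q Λ (x⁰)⁻¹ x⁺, λ₀ := −h⁻¹ s Λ (x⁰)⁻¹ r, λ₊ := −h⁻¹ Λ (x⁰)⁻¹ x⁻. Then the λ's satisfy the same commutation relations as the x's: λ₋λ₀ = q λ₀λ₋,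 λ₊λ₀ = q⁻¹ λ₀λ₊, and λ₊λ₋ − λ₋λ₊ = h λ₀². -/
set_option maxHeartbeats 1000000 in
/-- In an associative unital ℝ-algebra `R`, with the quantum
Euclidean space relations for `x⁻, x⁰, x⁺`, an invertible dilatation `Λ` with
`xⁱ Λ = q Λ xⁱ`, an invertible `x⁰`, and a central radius `r` with
`r Λ = q Λ r` and `r² = s x⁺x⁻ + (x⁰)² + s⁻¹ x⁻x⁺`, the elements
`λ₋ = h⁻¹ q Λ (x⁰)⁻¹ x⁺`, `λ₀ = −h⁻¹ s Λ (x⁰)⁻¹ r`, `λ₊ = −h⁻¹ Λ (x⁰)⁻¹ x⁻`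
satisfy the same commutation relations as the `x`'s:
`λ₋λ₀ = q λ₀λ₋`, `λ₊λ₀ = q⁻¹ λ₀λ₊`, `λ₊λ₋ − λ₋λ₊ = h λ₀²`. -/
theorem lambdas_satisfy_x_relations
    (R : Type*) [Ring R] [Algebra ℝ R]
    (q s h : ℝ) (hq : 0 < q) (hq1 : q ≠ 1) (hs : 0 < s) (hsq : s ^ 2 = q)
    (hh : h = s - s⁻¹)
    (xm x0 xp Λ r : R)
    (rel1 : xm * x0 = q • (x0 * xm))
    (rel2 : xp * x0 = q⁻¹ • (x0 * xp))
    (rel3 : xp * xm - xm * xp = h • (x0 ^ 2))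
    (hΛ : IsUnit Λ)
    (hΛm : xm * Λ = q • (Λ * xm))
    (hΛ0 : x0 * Λ = q • (Λ * x0))
    (hΛp : xp * Λ = q • (Λ * xp))
    (x0i : R) (hx0i : x0 * x0i = 1) (hx0i' : x0i * x0 = 1)
    (hrm : Commute r xm) (hr0 : Commute r x0) (hrp : Commute r xp)
    (hrΛ : r * Λ = q • (Λ * r))
    (hr2 : r ^ 2 = s • (xp * xm) + x0 ^ 2 + s⁻¹ • (xm * xp))
    (lm l0 lp : R)
    (hlm : lm = (h⁻¹ * q) • (Λ * x0i * xp))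
    (hl0 : l0 = -((h⁻¹ * s) • (Λ * x0i * r)))
    (hlp : lp = -(h⁻¹ • (Λ * x0i * xm))) :
    lm * l0 = q • (l0 * lm) ∧
    lp * l0 = q⁻¹ • (l0 * lp) ∧
    lp * lm - lm * lp = h • (l0 ^ 2) := by
  have hq0 : q ≠ 0 := hq.ne'
  have hs0 : s ≠ 0 := hs.ne'
  have hh0 : h ≠ 0 := by
    rw [hh, sub_ne_zero]
    intro e
    apply hq1
    rw [← hsq, pow_two]
    nth_rewrite 2 [e]
    exact mul_inv_cancel₀ hs0
  have hhs : h * s = s ^ 2 - 1 := by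
    rw [hh, sub_mul, inv_mul_cancel₀ hs0, pow_two]
  have hs21 : s ^ 2 - 1 ≠ 0 := sub_ne_zero.mpr (by rw [hsq]; exact hq1)
  have hhv : h = (s ^ 2 - 1) / s := by rw [eq_div_iff hs0]; exact hhs
  -- helper cancellation lemmas
  have cix : ∀ t : R, x0i * (x0 * t) = t := fun t => by
    rw [← mul_assoc, hx0i', one_mul]
  have cxi : ∀ t : R, x0 * (x0i * t) = t := fun t => by
    rw [← mul_assoc, hx0i, one_mul]
  -- commutation of x0i with the other generators
  have hixm : x0i * xm = q • (xm * x0i) := by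
    have e : x0i * ((xm * x0) * x0i) = x0i * ((q • (x0 * xm)) * x0i) := by rw [rel1]
    simpa [mul_assoc, hx0i, cix, mul_smul_comm, smul_mul_assoc] using e
  have hixp : x0i * xp = q⁻¹ • (xp * x0i) := by
    have e : x0i * ((xp * x0) * x0i) = x0i * ((q⁻¹ • (x0 * xp)) * x0i) := by rw [rel2]
    simpa [mul_assoc, hx0i, cix, mul_smul_comm, smul_mul_assoc] using e
  have hpxi : xp * x0i = q • (x0i * xp) := by
    rw [hixp, smul_smul, mul_inv_cancel₀ hq0, one_smul]
  have hmxi : xm * x0i = q⁻¹ • (x0i * xm) := by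
    rw [hixm, smul_smul, inv_mul_cancel₀ hq0, one_smul]
  have hri : r * x0i = x0i * r := by
    have e : x0i * ((x0 * r) * x0i) = x0i * ((r * x0) * x0i) := by rw [hr0.eq]
    simpa [mul_assoc, hx0i, cix] using e
  set A := Λ * x0i with hA
  clear_value A
  -- moving A to the left
  have haxp : xp * A = (q * q) • (A * xp) := by
    rw [hA, ← mul_assoc, hΛp, smul_mul_assoc, mul_assoc, hpxi, mul_smul_comm,
      smul_smul, ← mul_assoc]
  have haxm : xm * A = A * xm := by
    rw [hA, ← mul_assoc, hΛm, smul_mul_assoc, mul_assoc, hmxi, mul_smul_comm,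
      smul_smul, mul_inv_cancel₀ hq0, one_smul, mul_assoc]
  have har : r * A = q • (A * r) := by
    rw [hA, ← mul_assoc, hrΛ, smul_mul_assoc, mul_assoc, hri, mul_assoc]
  have haxp' : ∀ t : R, xp * (A * t) = (q * q) • (A * (xp * t)) := fun t => by
    rw [← mul_assoc, haxp, smul_mul_assoc, mul_assoc]
  have haxm' : ∀ t : R, xm * (A * t) = A * (xm * t) := fun t => by
    rw [← mul_assoc, haxm, mul_assoc]
  have har' : ∀ t : R, r * (A * t) = q • (A * (r * t)) := fun t => by
    rw [← mul_assoc, har, smul_mul_assoc, mul_assoc]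
  -- commutation of r with xp, xm
  have hrxp : r * xp = xp * r := hrp.eq
  have hrxm : r * xm = xm * r := hrm.eq
  have hrxp' : ∀ t : R, r * (xp * t) = xp * (r * t) := fun t => by
    rw [← mul_assoc, hrxp, mul_assoc]
  have hrxm' : ∀ t : R, r * (xm * t) = xm * (r * t) := fun t => by
    rw [← mul_assoc, hrxm, mul_assoc]
  -- xm xp reordering
  have hmp : xm * xp = xp * xm - h • (x0 * x0) := by
    rw [← pow_two, ← rel3]; abel
  have hmp' : ∀ t : R, xm * (xp * t) = xp * (xm * t) - h • (x0 * (x0 * t)) := fun t => by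
    rw [← mul_assoc, hmp, sub_mul, smul_mul_assoc, mul_assoc, mul_assoc]
  -- r squared expansion
  have hrr : r * r = s • (xp * xm) + x0 * x0 + s⁻¹ • (xm * xp) := by
    rw [← pow_two, hr2, pow_two]
  have hrr' : ∀ t : R, r * (r * t) =
      s • (xp * (xm * t)) + x0 * (x0 * t) + s⁻¹ • (xm * (xp * t)) := fun t => by
    rw [← mul_assoc, hrr, add_mul, add_mul, smul_mul_assoc, smul_mul_assoc,
      mul_assoc, mul_assoc, mul_assoc]
  refine ⟨?_, ?_, ?_⟩
  · rw [hlm, hl0]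
    simp only [mul_neg, neg_mul, smul_neg, mul_smul_comm, smul_mul_assoc, smul_smul,
      mul_assoc, haxp', haxm', har', haxp, haxm, har, hrxp', hrxm', hrxp, hrxm]
    match_scalars <;> (rw [hhv, ← hsq]; field_simp; try ring)
  · rw [hlp, hl0]
    simp only [mul_neg, neg_mul, smul_neg, neg_neg, mul_smul_comm, smul_mul_assoc, smul_smul,
      mul_assoc, haxp', haxm', har', haxp, haxm, har, hrxp', hrxm', hrxp, hrxm]
    match_scalars <;> (rw [hhv, ← hsq]; field_simp; try ring)
  · rw [hlp, hlm, hl0]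
    simp only [pow_two, mul_neg, neg_mul, smul_neg, neg_neg, mul_smul_comm, smul_mul_assoc,
      smul_smul, mul_assoc, mul_sub, mul_add, sub_mul, add_mul, smul_sub, smul_add,
      haxp', haxm', har', haxp, haxm, har, hrxp', hrxm', hrxp, hrxm, hrr', hrr, hmp', hmp]
    match_scalars <;> (rw [hhv, ← hsq]; field_simp; try ring)
end

section
/- Let R be an associative unital algebra over ℝ, q > 0 real with q ≠ 1, s > 0 with s² = q, h = s − s⁻¹. Suppose x⁻, x⁰, x⁺ ∈ R satisfy x⁻x⁰ = q x⁰x⁻, x⁺x⁰ = q⁻¹ x⁰x⁺, x⁺x⁻ − x⁻x⁺ = h (x⁰)², that x⁰ is invertible, and that r ∈ R is invertible, commutes with x⁻, x⁰, x⁺, and satisfies r² = s x⁺x⁻ + (x⁰)² + s⁻¹ x⁻x⁺. Let Θ = ‖θ^a_i‖ be the lower triangular frame matrix with rows ((x⁰)⁻¹, 0, 0), (s(q+1) r⁻¹(x⁰)⁻¹ x⁺, r⁻¹, 0), (−s q(q+1) r⁻²(x⁰)⁻¹(x⁺)², −(q+1) r⁻² x⁺, r⁻² x⁰) (indices ordered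 −, 0, +), and let E = ‖e^i_a‖ be its two-sided inverse. Let g be the 3×3 matrix with g_{+,−} = s, g_{0,0} = 1, g_{−,+} = s⁻¹ and all other entries 0. Then the `gTT relations' hold: Σ_{a,b} g_{a,b} e^i_a e^j_b = r² g_{i,j} and Σ_{i,j} g_{i,j} e^i_a e^j_b = r² g_{a,b} for all indices, where the products e e are taken in the given order in R. -/
set_option maxHeartbeats 1000000 in
/-- On the quantum Euclidean space `ℝ_q³` (with central
radius `r`, invertible `x⁰`), let `Θ = ‖θ^a_i‖` be the frame matrix and
`E = ‖e^i_a‖` its two-sided inverse, and let `g` be the `SO_q(3)`-covariant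
metric matrix with nonzero entries `g₊₋ = s`, `g₀₀ = 1`, `g₋₊ = s⁻¹`
(indices ordered `−, 0, +`).  Then the `gTT`-relations hold:
`Σ_{a,b} g_{ab} e^i_a e^j_b = r² g^{ij}` and
`Σ_{i,j} g_{ij} e^i_a e^j_b = r² g_{ab}`. -/
theorem gTT_relations
    (R : Type*) [Ring R] [Algebra ℝ R]
    (q s h : ℝ) (hq : 0 < q) (hq1 : q ≠ 1) (hs : 0 < s) (hsq : s ^ 2 = q)
    (hh : h = s - s⁻¹)
    (xm x0 xp r : R)
    (rel1 : xm * x0 = q • (x0 * xm))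
    (rel2 : xp * x0 = q⁻¹ • (x0 * xp))
    (rel3 : xp * xm - xm * xp = h • (x0 ^ 2))
    (x0i : R) (hx0i : x0 * x0i = 1) (hx0i' : x0i * x0 = 1)
    (ri : R) (hri : r * ri = 1) (hri' : ri * r = 1)
    (hrm : Commute r xm) (hr0 : Commute r x0) (hrp : Commute r xp)
    (hr2 : r ^ 2 = s • (xp * xm) + x0 ^ 2 + s⁻¹ • (xm * xp))
    (Θ : Matrix (Fin 3) (Fin 3) R)
    (hΘ : Θ = !![x0i, 0, 0;
                 (s * (q + 1)) • (ri * x0i * xp), ri, 0;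
                 -((s * q * (q + 1)) • (ri * ri * x0i * (xp * xp))),
                   -((q + 1) • (ri * ri * xp)), ri * ri * x0])
    (E : Matrix (Fin 3) (Fin 3) R) (hE : Θ * E = 1) (hE' : E * Θ = 1)
    (g : Matrix (Fin 3) (Fin 3) ℝ)
    (hg : g = !![0, 0, s⁻¹; 0, 1, 0; s, 0, 0]) :
    (∀ i j : Fin 3, (∑ a : Fin 3, ∑ b : Fin 3, g a b • (E i a * E j b)) =
        g i j • (r ^ 2)) ∧
    (∀ a b : Fin 3, (∑ i : Fin 3, ∑ j : Fin 3, g i j • (E i a * E j b)) =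
        g a b • (r ^ 2)) := by
  subst hsq
  have hs0 : s ≠ 0 := ne_of_gt hs
  have hq0 : s ^ 2 ≠ 0 := pow_ne_zero 2 hs0
  -- word rewriting rules
  have Lx0x0i : ∀ w : R, x0 * (x0i * w) = w := fun w => by
    rw [← mul_assoc, hx0i, one_mul]
  have Lx0ix0 : ∀ w : R, x0i * (x0 * w) = w := fun w => by
    rw [← mul_assoc, hx0i', one_mul]
  have Lrir : ∀ w : R, ri * (r * w) = w := fun w => by
    rw [← mul_assoc, hri', one_mul]
  have Lrri : ∀ w : R, r * (ri * w) = w := fun w => by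
    rw [← mul_assoc, hri, one_mul]
  have Crx0 : r * x0 = x0 * r := hr0.eq
  have Crxp : r * xp = xp * r := hrp.eq
  have Crx0i : r * x0i = x0i * r := by
    calc r * x0i = x0i * (x0 * (r * x0i)) := (Lx0ix0 _).symm
      _ = x0i * (x0 * r * x0i) := by rw [mul_assoc x0 r x0i]
      _ = x0i * (r * x0 * x0i) := by rw [← hr0.eq]
      _ = x0i * (r * (x0 * x0i)) := by rw [mul_assoc r]
      _ = x0i * r := by rw [hx0i, mul_one]
  have Lrx0i : ∀ w : R, r * (x0i * w) = x0i * (r * w) := fun w => by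
    rw [← mul_assoc, Crx0i, mul_assoc]
  have Lrxp : ∀ w : R, r * (xp * w) = xp * (r * w) := fun w => by
    rw [← mul_assoc, hrp.eq, mul_assoc]
  have Lrx0 : ∀ w : R, r * (x0 * w) = x0 * (r * w) := fun w => by
    rw [← mul_assoc, hr0.eq, mul_assoc]
  have Cxpx0 : xp * x0 = (s ^ 2)⁻¹ • (x0 * xp) := rel2
  have Lxpx0 : ∀ w : R, xp * (x0 * w) = (s ^ 2)⁻¹ • (x0 * (xp * w)) := fun w => by
    rw [← mul_assoc, Cxpx0, smul_mul_assoc, mul_assoc]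
  have Cx0xp : x0 * xp = (s ^ 2) • (xp * x0) := by
    rw [Cxpx0, smul_smul, mul_inv_cancel₀ hq0, one_smul]
  have Cxpx0i : xp * x0i = (s ^ 2) • (x0i * xp) := by
    calc xp * x0i = x0i * (x0 * (xp * x0i)) := (Lx0ix0 _).symm
      _ = x0i * (x0 * xp * x0i) := by rw [mul_assoc x0 xp x0i]
      _ = x0i * ((s ^ 2) • (xp * x0) * x0i) := by rw [Cx0xp]
      _ = (s ^ 2) • (x0i * (xp * (x0 * x0i))) := by
          rw [smul_mul_assoc, mul_smul_comm, mul_assoc xp]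
      _ = (s ^ 2) • (x0i * xp) := by rw [hx0i, mul_one]
  have Lxpx0i : ∀ w : R, xp * (x0i * w) = (s ^ 2) • (x0i * (xp * w)) := fun w => by
    rw [← mul_assoc, Cxpx0i, smul_mul_assoc, mul_assoc]
  -- the explicit inverse of Θ
  set E₂ : Matrix (Fin 3) (Fin 3) R := !![x0, 0, 0;
      -(((s ^ 2 + 1) * s⁻¹) • xp), r, 0;
      -((s * (s ^ 2 + 1)) • (x0i * (xp * xp))), (s ^ 2 + 1) • (x0i * (xp * r)),
        x0i * (r * r)] with hE₂
  have hTE : Θ * E₂ = 1 := by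
    subst hΘ
    ext i j
    fin_cases i <;> fin_cases j <;>
      simp [Matrix.mul_apply, Fin.sum_univ_three, Matrix.one_fin_three, hE₂] <;>
      simp only [mul_zero, zero_mul, add_zero, zero_add, zero_smul, smul_zero,
        mul_one, one_mul, one_smul, neg_mul, mul_neg, neg_neg, neg_smul, smul_neg,
        smul_mul_assoc, mul_smul_comm, smul_smul, mul_assoc,
        Lx0x0i, Lx0ix0, Lrir, Lrri, Lrx0i, Lrxp, Lrx0, Lxpx0, Lxpx0i,
        Crx0, Crxp, Crx0i, Cxpx0, Cxpx0i, hx0i, hx0i', hri, hri'] <;>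
      match_scalars <;> (field_simp; try ring)
  have hEeq : E = E₂ := by
    calc E = E * (Θ * E₂) := by rw [hTE, mul_one]
      _ = (E * Θ) * E₂ := by rw [mul_assoc]
      _ = E₂ := by rw [hE', one_mul]
  subst hEeq hg
  constructor <;> intro i j <;> fin_cases i <;> fin_cases j <;>
    simp [Fin.sum_univ_three, hE₂, pow_two, Matrix.vecHead, Matrix.vecTail,
      -smul_eq_zero] <;>
    (try simp only [mul_zero, zero_mul, add_zero, zero_add, zero_smul, smul_zero,
      mul_one, one_mul, one_smul, neg_mul, mul_neg, neg_neg, neg_smul, smul_neg,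
      smul_mul_assoc, mul_smul_comm, smul_smul, mul_assoc, pow_two,
      Lx0x0i, Lx0ix0, Lrir, Lrri, Lrx0i, Lrxp, Lrx0, Lxpx0, Lxpx0i,
      Crx0, Crxp, Crx0i, Cxpx0, Cxpx0i, hx0i, hx0i', hri, hri']) <;>
    match_scalars <;> (field_simp; try ring)
end
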